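/- For every n there is a deterministic 2-store automaton A_n with O(n³) states accepting exactly the configurations (⊥,v₁)…(⊥,v_n) with p_i dividing v_i for each i (p_i the i-th prime), such that every tree automaton recognizing the E-encoding of this set needs at least 2ⁿ states. Hence the translation from 2-store automata to tree automata over the encoding E requires an exponential blow-up. -/

import Mathlib

/-! Binary trees, tree automata, the tree encoding `E` of level-2 counter
configurations, and (alternating) 2-store automata. -/

namespace Enc

/-- Binary trees with node labels in `α` (`nil` is the empty tree). -/
inductive BTree (α : Type) where
  | nil : BTree α
  | node (a : α) (l r : BTree α) : BTree α

/-- A (nondeterministic, bottom-up) finite tree automaton with states `St`. -/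
structure TreeAut (α St : Type) where
  leaf : Set St
  trans : α → St → St → Set St
  accept : Set St

/-- Evaluation relation of a tree automaton. -/
inductive TreeAutEval {α St : Type} (A : TreeAut α St) : BTree α → St → Prop
  | nil {s : St} : s ∈ A.leaf → TreeAutEval A .nil s
  | node {a : α} {l r : BTree α} {sl sr s : St} :
      TreeAutEval A l sl → TreeAutEval A r sr → s ∈ A.trans a sl sr →
      TreeAutEval A (.node a l r) s

def TreeAut.Accepts {α St : Type} (A : TreeAut α St) (t : BTree α) : Prop :=
  ∃ s ∈ A.accept, TreeAutEval A t s

/-- A set of trees is regular iff it is recognized by a tree automaton with a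
finite state set. -/
def TreeRegular {α : Type} (T : Set (BTree α)) : Prop :=
  ∃ (St : Type) (_ : Fintype St) (A : TreeAut α St), T = { t | A.Accepts t }

/-- The tree encoding `E` of a level-2 storage `p ∈ (Σ × ℕ)⁺` (as a relation;
`bot` is the designated symbol `⊥` labelling inner nodes):
`E(∅) = ∅`; if the first counter is `0` then `E((σ,0)·p_r) = ⊥(σ, E(p_r))`;
otherwise split `p` into the maximal prefix `p_l` with all counters `≥ 1`
(decremented) and the rest `p_r`, and `E(p) = ⊥(E(p_l), E(p_r))`. -/
inductive Encodes {Sig Q : Type} (bot : Sig) :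
    List (Sig × ℕ) → BTree (Sig ⊕ Q) → Prop
  | nil : Encodes bot [] .nil
  | zero {σ : Sig} {pr : List (Sig × ℕ)} {t : BTree (Sig ⊕ Q)} :
      Encodes bot pr t →
      Encodes bot ((σ, 0) :: pr)
        (.node (.inl bot) (.node (.inl σ) .nil .nil) t)
  | pos {pl pr : List (Sig × ℕ)} {tl tr : BTree (Sig ⊕ Q)} :
      pl ≠ [] → (∀ e ∈ pl, 1 ≤ e.2) →
      (∀ x, pr.head? = some x → x.2 = 0) →
      Encodes bot (pl.map (fun e => (e.1, e.2 - 1))) tl →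
      Encodes bot pr tr →
      Encodes bot (pl ++ pr) (.node (.inl bot) tl tr)

/-- Encoding of a configuration `(q,p)`: the tree `q(E(p), ∅)`. -/
def EncodesCfg {Sig Q : Type} (bot : Sig) (c : Q × List (Sig × ℕ))
    (t : BTree (Sig ⊕ Q)) : Prop :=
  ∃ tp, Encodes bot c.2 tp ∧ t = .node (.inr c.1) tp .nil

/-- The set of encodings of a set of configurations. -/
def EncImage {Sig Q : Type} (bot : Sig) (C : Set (Q × List (Sig × ℕ))) :
    Set (BTree (Sig ⊕ Q)) :=
  { t | ∃ c ∈ C, EncodesCfg bot c t }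

/-- A deterministic finite automaton over the unary alphabet `{⊥}`. -/
structure UnaryDFA (S : Type) where
  init : S
  next : S → S
  acc : Set S

/-- `D` accepts the word `⊥^m`. -/
def UnaryDFA.Accepts {S : Type} (D : UnaryDFA S) (m : ℕ) : Prop :=
  D.next^[m] D.init ∈ D.acc

/-- An alternating 2-store automaton: states `Q'` (partitioned into
existential (`exQ = true`) and universal states), final states, and a finite
set `T` of transitions, each with a source state, a symbol label, a unary
finite automaton checking the counter, and a destination state. -/
structure TwoStore (Q' Sig S T : Type) where
  exQ : Q' → Bool
  final : Set Q'
  src : T → Q'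
  sym : T → Sig
  chk : T → UnaryDFA S
  dst : T → Q'

/-- Accepting computations of a 2-store automaton on a storage, processed
entry by entry; at existential states one matching transition must succeed,
at universal states some transition must match and all matching transitions
must succeed. -/
inductive TwoStoreAcc {Q' Sig S T : Type} (A : TwoStore Q' Sig S T) :
    Q' → List (Sig × ℕ) → Prop
  | empty {q : Q'} : q ∈ A.final → TwoStoreAcc A q []
  | ex {q : Q'} {σ : Sig} {m : ℕ} {rest : List (Sig × ℕ)} (t : T) :
      A.exQ q = true → A.src t = q → A.sym t = σ → (A.chk t).Accepts m →
      TwoStoreAcc A (A.dst t) rest →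
      TwoStoreAcc A q ((σ, m) :: rest)
  | all {q : Q'} {σ : Sig} {m : ℕ} {rest : List (Sig × ℕ)} :
      A.exQ q = false →
      (∃ t : T, A.src t = q ∧ A.sym t = σ ∧ (A.chk t).Accepts m) →
      (∀ t : T, A.src t = q → A.sym t = σ → (A.chk t).Accepts m →
        TwoStoreAcc A (A.dst t) rest) →
      TwoStoreAcc A q ((σ, m) :: rest)

/-- A set of configurations is 2-store-regular iff it is recognized (via an
embedding of the configuration states) by an alternating 2-store automaton
with finitely many states, checking automata states and transitions. -/
def TwoStoreRegular {Q Sig : Type} (C : Set (Q × List (Sig × ℕ))) : Prop :=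
  ∃ (Q' S T : Type) (_ : Fintype Q') (_ : Fintype S) (_ : Fintype T)
    (A : TwoStore Q' Sig S T) (ι : Q → Q'),
    C = { c | TwoStoreAcc A (ι c.1) c.2 }

end Enc

/-- The set of storages `(⊥,v₁)…(⊥,v_n)` with `p_i ∣ v_i` for each `i`
(`p_i` the `i`-th prime, `Nat.nth Nat.Prime 0 = 2`). -/
def DivStor {Sig : Type} (bot : Sig) (n : ℕ) : Set (List (Sig × ℕ)) :=
  { x | x.length = n ∧ ∀ i : Fin x.length,
      (x.get i).1 = bot ∧ Nat.nth Nat.Prime (i : ℕ) ∣ (x.get i).2 }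

/-! The automaton reads the `n` entries in order; at the `i`-th entry it runs a
cyclic unary automaton with `p_i` states, and Chebyshev's bound `p_i = O(i²)` keeps the total
size cubic. For the lower bound, let `m = p₀ ⋯ p_{n-1} ≥ 2ⁿ`. The encoding of `(⊥,m)ⁿ` is the
encoding of `(⊥,0)ⁿ` wrapped `m` times in the context `⊥(·, ∅)`, so an accepting run of an
automaton with fewer than `m` states repeats a state along these `m` wrappings. Cutting out the
loop yields an accepted encoding of `(⊥,k)ⁿ` with `0 < k < m`, but not every `p_i` divides `k`. -/

namespace Nat

open scoped Nat.Prime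

theorem lcmUpto_le_pow_primeCounting (N : ℕ) : lcmUpto N ≤ N ^ π N := by
  rcases N.eq_zero_or_pos with rfl | hN
  · simp [lcmUpto]
  rw [lcmUpto_eq_prod_pow_log, ← primesLE_card_eq_primeCounting]
  exact Finset.prod_le_pow_card _ _ _ fun p _ => pow_log_le_self p hN.ne'

theorem two_pow_le_mul_pow_primeCounting (N : ℕ) : 2 ^ N ≤ (N + 1) * N ^ π N :=
  (Chebyshev.two_pow_le_mul_lcmUpto N).trans <|
    Nat.mul_le_mul_left _ (lcmUpto_le_pow_primeCounting N)

theorem two_mul_pow_self_lt_two_pow_sq {y : ℕ} (hy : 2 ≤ y) : 2 * y ^ y < 2 ^ (y ^ 2) :=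
  calc 2 * y ^ y ≤ 2 * (2 ^ (y - 1)) ^ y := by
        have := @Nat.lt_two_pow_self (y - 1)
        gcongr; omega
    _ = 2 ^ ((y - 1) * y + 1) := by rw [← pow_mul, pow_succ']
    _ < 2 ^ (y ^ 2) := Nat.pow_lt_pow_right (by norm_num) <| by
        zify [(by omega : 1 ≤ y)]; nlinarith

theorem lt_primeCounting_four_mul_sq (k : ℕ) : k < π (4 * (k + 1) ^ 2) := by
  -- `y = 2(k+1)` is chosen so that `(y²)^(k+1) = y^y`.
  by_contra! hk
  set y := 2 * (k + 1) with hy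
  have hN : 4 * (k + 1) ^ 2 = y ^ 2 := by rw [hy]; ring
  rw [hN] at hk
  refine (two_pow_le_mul_pow_primeCounting (y ^ 2)).not_gt ?_
  calc (y ^ 2 + 1) * (y ^ 2) ^ π (y ^ 2) ≤ (2 * y ^ 2) * (y ^ 2) ^ k := by
        gcongr
        · nlinarith
        · nlinarith
    _ = 2 * y ^ y := by rw [mul_assoc, ← pow_succ', ← pow_mul, ← hy]
    _ < 2 ^ (y ^ 2) := two_mul_pow_self_lt_two_pow_sq (by omega)

theorem nth_prime_le_four_mul_sq (k : ℕ) : nth Prime k ≤ 4 * (k + 1) ^ 2 :=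
  Nat.lt_succ_iff.mp (nth_lt_of_lt_count (lt_primeCounting_four_mul_sq k))

theorem sum_range_nth_prime_le (n : ℕ) : ∑ i ∈ Finset.range n, nth Prime i ≤ 4 * n ^ 3 :=
  calc ∑ i ∈ Finset.range n, nth Prime i ≤ ∑ _i ∈ Finset.range n, 4 * n ^ 2 :=
        Finset.sum_le_sum fun i hi => (nth_prime_le_four_mul_sq i).trans <| by
          have := Finset.mem_range.mp hi
          gcongr; omega
    _ = 4 * n ^ 3 := by rw [Finset.sum_const, Finset.card_range, smul_eq_mul]; ring

theorem two_pow_le_prod_range_nth_prime (n : ℕ) : 2 ^ n ≤ ∏ i ∈ Finset.range n, nth Prime i := by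
  simpa using Finset.pow_card_le_prod (Finset.range n) _ 2 fun i _ => (prime_nth_prime i).two_le

theorem prod_range_nth_prime_dvd {n v : ℕ} (h : ∀ i < n, nth Prime i ∣ v) :
    ∏ i ∈ Finset.range n, nth Prime i ∣ v := by
  have hprimes : ∏ p ∈ (Finset.range n).image (nth Prime), p ∣ v := by
    refine Finset.prod_primes_dvd v ?_ ?_ <;> simp only [Finset.mem_image, Finset.mem_range]
    · rintro _ ⟨i, -, rfl⟩
      exact (prime_nth_prime i).prime
    · rintro _ ⟨i, hi, rfl⟩
      exact h i hi
  rwa [Finset.prod_image fun i _ j _ hij => nth_injective infinite_setOfPred_prime hij] at hprimes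

instance (i : ℕ) : NeZero (nth Prime i) := ⟨(prime_nth_prime i).ne_zero⟩

end Nat

theorem List.eq_replicate_succ_of_map_pred {β : Type} {b : β} {n k : ℕ} {l : List (β × ℕ)}
    (hmap : l.map (fun e => (e.1, e.2 - 1)) = List.replicate n (b, k))
    (hpos : ∀ e ∈ l, 1 ≤ e.2) :
    l = List.replicate n (b, k + 1) := by
  rw [List.eq_replicate_iff] at hmap ⊢
  refine ⟨by simpa using hmap.1, fun e he => ?_⟩
  obtain ⟨hfst, hsnd⟩ := Prod.mk.inj (hmap.2 _ (List.mem_map_of_mem he))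
  have := hpos e he
  ext
  · exact hfst
  · simp only at hsnd ⊢; omega

namespace Enc

section UnaryDFA

variable {ι : Type} {S : ι → Type}

def UnaryDFA.modCounter (d : ℕ) : UnaryDFA (ZMod d) where
  init := 0
  next := (· + 1)
  acc := {0}

theorem UnaryDFA.modCounter_accepts_iff {d m : ℕ} : (modCounter d).Accepts m ↔ d ∣ m := by
  simp [UnaryDFA.Accepts, modCounter, add_right_iterate, ZMod.natCast_eq_zero_iff]

/-- All checking automata of a `TwoStore` share one state type; this runs the `D j` side by side
on the disjoint union of their state sets. -/
def UnaryDFA.sigma (D : ∀ i, UnaryDFA (S i)) (i : ι) : UnaryDFA (Σ j, S j) where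
  init := ⟨i, (D i).init⟩
  next s := ⟨s.1, (D s.1).next s.2⟩
  acc := Sigma.mk i '' (D i).acc

theorem UnaryDFA.sigma_accepts_iff {D : ∀ i, UnaryDFA (S i)} {i : ι} {m : ℕ} :
    (UnaryDFA.sigma D i).Accepts m ↔ (D i).Accepts m := by
  have hsemiconj : Function.Semiconj (Sigma.mk i) (D i).next (UnaryDFA.sigma D i).next :=
    fun _ => rfl
  rw [UnaryDFA.Accepts, UnaryDFA.Accepts, show (sigma D i).init = ⟨i, (D i).init⟩ from rfl,
    ← (hsemiconj.iterate_right m).eq]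
  exact sigma_mk_injective.mem_set_image

end UnaryDFA

section TwoStore

variable {Q' Sig S T : Type} {A : TwoStore Q' Sig S T}

theorem TwoStoreAcc.nil_iff {q : Q'} : TwoStoreAcc A q [] ↔ q ∈ A.final :=
  ⟨fun h => by cases h; assumption, .empty⟩

theorem TwoStoreAcc.cons_iff_of_exQ {q : Q'} (hq : A.exQ q = true) {σ : Sig} {m : ℕ}
    {rest : List (Sig × ℕ)} :
    TwoStoreAcc A q ((σ, m) :: rest) ↔
      ∃ t, A.src t = q ∧ A.sym t = σ ∧ (A.chk t).Accepts m ∧ TwoStoreAcc A (A.dst t) rest := by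
  constructor
  · rintro (_ | ⟨t, -, hsrc, hsym, hchk, hrest⟩ | ⟨hq', -, -⟩)
    · exact ⟨t, hsrc, hsym, hchk, hrest⟩
    · simp [hq] at hq'
  · rintro ⟨t, hsrc, hsym, hchk, hrest⟩
    exact .ex t hq hsrc hsym hchk hrest

/-- The automaton `A_n` of the paper, with moduli `d i` in place of the primes `p_i`. -/
def divChecker (bot : Sig) (d : ℕ → ℕ) (n : ℕ) :
    TwoStore (Fin (n + 1)) Sig (Σ i : Fin n, ZMod (d i)) (Fin n) where
  exQ _ := true
  final := {Fin.last n}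
  src := Fin.castSucc
  sym _ := bot
  chk := UnaryDFA.sigma fun i => UnaryDFA.modCounter (d i)
  dst := Fin.succ

theorem divChecker_acc_iff (bot : Sig) (d : ℕ → ℕ) {n : ℕ} (x : List (Sig × ℕ))
    (j : Fin (n + 1)) :
    TwoStoreAcc (divChecker bot d n) j x ↔
      x.Forall₂ (fun e i => e.1 = bot ∧ d i ∣ e.2) (List.range' j (n - j)) := by
  induction x generalizing j with
  | nil =>
    rw [TwoStoreAcc.nil_iff, List.forall₂_nil_left_iff, List.range'_eq_nil_iff]
    simp only [divChecker, Set.mem_singleton_iff, Fin.ext_iff, Fin.val_last]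
    omega
  | cons e rest ih =>
    obtain ⟨σ, m⟩ := e
    rw [TwoStoreAcc.cons_iff_of_exQ rfl]
    induction j using Fin.lastCases with
    | last => simp [divChecker]
    | cast i =>
      have hlen : n - i = n - (i + 1) + 1 := by omega
      simp only [ih]
      simp only [divChecker, Fin.castSucc_inj, exists_eq_left, Fin.val_castSucc, hlen,
        List.range'_succ, List.forall₂_cons, UnaryDFA.sigma_accepts_iff,
        UnaryDFA.modCounter_accepts_iff, Fin.val_succ, eq_comm (a := bot), and_assoc]

theorem divChecker_language (bot : Sig) (d : ℕ → ℕ) (n : ℕ) :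
    { x | TwoStoreAcc (divChecker bot d n) 0 x } =
      { x | x.Forall₂ (fun e i => e.1 = bot ∧ d i ∣ e.2) (List.range n) } := by
  ext x
  simp [divChecker_acc_iff, List.range_eq_range']

theorem card_divChecker_nth_prime_le (n : ℕ) :
    Fintype.card (Fin (n + 1)) + Fintype.card (Σ i : Fin n, ZMod (Nat.nth Nat.Prime i)) +
      Fintype.card (Fin n) ≤ 4 * (n + 1) ^ 3 := by
  have hsum := Nat.sum_range_nth_prime_le n
  simp only [Fintype.card_fin, Fintype.card_sigma, ZMod.card,
    Fin.sum_univ_eq_sum_range (Nat.nth Nat.Prime)]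
  nlinarith

end TwoStore

section Encoding

variable {Sig Q : Type} (bot : Sig)

/-- The encoding `E((⊥,0)ⁿ)`. -/
def zeroEnc : ℕ → BTree (Sig ⊕ Q)
  | 0 => .nil
  | n + 1 => .node (.inl bot) (.node (.inl bot) .nil .nil) (zeroEnc n)

/-- The encoding `E((⊥,k)ⁿ)` (for `n ≠ 0`). -/
def replicateEnc (n k : ℕ) : BTree (Sig ⊕ Q) :=
  (BTree.node (.inl bot) · .nil)^[k] (zeroEnc bot n)

theorem replicateEnc_succ (n k : ℕ) :
    replicateEnc (Q := Q) bot n (k + 1) = .node (.inl bot) (replicateEnc bot n k) .nil :=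
  Function.iterate_succ_apply' ..

variable {bot}

theorem Encodes.eq_nil {x : List (Sig × ℕ)} (h : Encodes (Q := Q) bot x .nil) : x = [] := by
  cases h; rfl

theorem Encodes.not_leaf {x : List (Sig × ℕ)} {a : Sig ⊕ Q} :
    ¬ Encodes bot x (.node a .nil .nil) := by
  intro h
  cases h with
  | pos hpl _ _ hl _ => exact hpl (List.map_eq_nil_iff.mp hl.eq_nil)

theorem encodes_zeroEnc (n : ℕ) :
    Encodes (Q := Q) bot (List.replicate n (bot, 0)) (zeroEnc bot n) := by
  induction n with
  | zero => exact .nil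
  | succ n ih => exact .zero ih

theorem Encodes.eq_of_zeroEnc {n : ℕ} {x : List (Sig × ℕ)}
    (h : Encodes (Q := Q) bot x (zeroEnc bot n)) : x = List.replicate n (bot, 0) := by
  induction n generalizing x with
  | zero => exact h.eq_nil
  | succ n ih =>
    obtain _ | ⟨hrest⟩ | ⟨-, -, -, hl, -⟩ := h
    · rw [ih hrest, List.replicate_succ]
    · exact absurd hl Encodes.not_leaf

theorem encodes_replicateEnc {n : ℕ} (hn : n ≠ 0) (k : ℕ) :
    Encodes (Q := Q) bot (List.replicate n (bot, k)) (replicateEnc bot n k) := by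
  induction k with
  | zero => exact encodes_zeroEnc n
  | succ k ih =>
    rw [replicateEnc_succ, ← List.append_nil (List.replicate _ _)]
    refine .pos (by simpa using hn) (by simp) (by simp) ?_ .nil
    simpa only [List.map_replicate, Nat.add_sub_cancel] using ih

theorem Encodes.eq_of_replicateEnc {n k : ℕ} (hn : n ≠ 0) {x : List (Sig × ℕ)}
    (h : Encodes (Q := Q) bot x (replicateEnc bot n k)) : x = List.replicate n (bot, k) := by
  induction k generalizing x with
  | zero => exact h.eq_of_zeroEnc
  | succ k ih =>
    rw [replicateEnc_succ] at h
    generalize ht : replicateEnc bot n k = t at h ih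
    obtain _ | ⟨-⟩ | ⟨-, hpos, -, hl, hr⟩ := h
    · exact absurd (ht ▸ encodes_replicateEnc hn k) Encodes.not_leaf
    · rw [hr.eq_nil, List.append_nil]
      exact List.eq_replicate_succ_of_map_pred (ih hl) hpos

theorem node_replicateEnc_mem_encImage_iff {n k : ℕ} (hn : n ≠ 0) {q : Q}
    {C : Set (Q × List (Sig × ℕ))} :
    .node (.inr q) (replicateEnc bot n k) .nil ∈ EncImage bot C ↔
      (q, List.replicate n (bot, k)) ∈ C := by
  constructor
  · rintro ⟨⟨q', x⟩, hc, tp, htp, heq⟩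
    simp only [BTree.node.injEq, Sum.inr.injEq] at heq
    obtain ⟨rfl, rfl, -⟩ := heq
    rwa [← htp.eq_of_replicateEnc hn]
  · exact fun hc => ⟨_, hc, _, encodes_replicateEnc hn k, rfl⟩

end Encoding

section Pumping

variable {α St : Type} {A : TreeAut α St} {a : α} {r : BTree α}

theorem TreeAutEval.exists_state_of_iterate {u : BTree α} {s : St} :
    ∀ {j : ℕ}, TreeAutEval A ((BTree.node a · r)^[j] u) s →
      ∃ s₀, TreeAutEval A u s₀ ∧
        ∀ u', TreeAutEval A u' s₀ → TreeAutEval A ((BTree.node a · r)^[j] u') s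
  | 0, h => ⟨s, h, fun _ => id⟩
  | j + 1, h => by
    rw [Function.iterate_succ_apply'] at h
    obtain _ | ⟨hl, hr, htrans⟩ := h
    obtain ⟨s₀, hu, hctx⟩ := exists_state_of_iterate hl
    exact ⟨s₀, hu, fun u' hu' => by
      rw [Function.iterate_succ_apply']
      exact .node (hctx u' hu') hr htrans⟩

theorem TreeAutEval.pump_iterate [Fintype St] {t : BTree α} {s : St} {k : ℕ}
    (hk : Fintype.card St < k) (h : TreeAutEval A ((BTree.node a · r)^[k] t) s) :
    ∃ k', 0 < k' ∧ k' < k ∧ TreeAutEval A ((BTree.node a · r)^[k'] t) s := by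
  have hsplit : ∀ i : Fin k, ∃ s₀, TreeAutEval A ((BTree.node a · r)^[i + 1] t) s₀ ∧
      ∀ u', TreeAutEval A u' s₀ → TreeAutEval A ((BTree.node a · r)^[k - (i + 1)] u') s := by
    intro i
    refine exists_state_of_iterate ?_
    rwa [← Function.iterate_add_apply, Nat.sub_add_cancel i.2]
  choose g hg hctx using hsplit
  obtain ⟨i, j, hij, hgij⟩ := Fintype.exists_ne_map_eq_of_card_lt g (by simpa using hk)
  wlog hlt : i < j generalizing i j
  · exact this j i hij.symm hgij.symm (lt_of_le_of_ne (not_lt.mp hlt) hij.symm)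
  refine ⟨k - (j + 1) + (i + 1), by omega, by omega, ?_⟩
  rw [Function.iterate_add_apply]
  exact hctx j _ (hgij ▸ hg i)

end Pumping

end Enc

open Enc

theorem divStor_eq {Sig : Type} (bot : Sig) (n : ℕ) :
    DivStor bot n =
      { x | x.Forall₂ (fun e i => e.1 = bot ∧ Nat.nth Nat.Prime i ∣ e.2) (List.range n) } := by
  ext x
  simp only [DivStor, List.forall₂_iff_get, List.length_range, List.get_eq_getElem,
    List.getElem_range, Set.mem_ofPred_eq]
  constructor
  · rintro ⟨rfl, h⟩
    exact ⟨rfl, fun i h₁ _ => h ⟨i, h₁⟩⟩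
  · rintro ⟨rfl, h⟩
    exact ⟨rfl, fun i => h i i.2 i.2⟩

theorem replicate_mem_divStor_iff {Sig : Type} (bot : Sig) {n v : ℕ} :
    List.replicate n (bot, v) ∈ DivStor bot n ↔ ∀ i < n, Nat.nth Nat.Prime i ∣ v := by
  simp [DivStor, Fin.forall_iff]

theorem two_pow_le_card_of_accepts_eq_encImage {Sig St : Type} [Fintype St] (bot : Sig)
    {n : ℕ} {TA : TreeAut (Sig ⊕ Unit) St}
    (hTA : { t | TA.Accepts t } =
      EncImage bot { c : Unit × List (Sig × ℕ) | c.2 ∈ DivStor bot n }) :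
    2 ^ n ≤ Fintype.card St := by
  have hacc t : TA.Accepts t ↔ t ∈ EncImage bot _ := Set.ext_iff.mp hTA t
  rcases Nat.eq_zero_or_pos n with rfl | hn
  · obtain ⟨s, -, -⟩ := (hacc (.node (.inr ()) .nil .nil)).2
      ⟨((), []), ⟨rfl, fun i => i.elim0⟩, .nil, .nil, rfl⟩
    exact Fintype.card_pos_iff.mpr ⟨s⟩
  have hrep k : TA.Accepts (.node (.inr ()) (replicateEnc bot n k) .nil) ↔
      ∀ i < n, Nat.nth Nat.Prime i ∣ k := by
    rw [hacc, node_replicateEnc_mem_encImage_iff hn.ne']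
    exact replicate_mem_divStor_iff bot
  by_contra! hlt
  set m := ∏ i ∈ Finset.range n, Nat.nth Nat.Prime i
  obtain ⟨s, hs, hrun⟩ := (hrep m).2 fun i hi => Finset.dvd_prod_of_mem _ (Finset.mem_range.2 hi)
  cases hrun with
  | node hsub hnil htrans =>
    obtain ⟨k, hk0, hkm, hsub'⟩ :=
      hsub.pump_iterate (hlt.trans_le (Nat.two_pow_le_prod_range_nth_prime n))
    have hmk : m ∣ k := Nat.prod_range_nth_prime_dvd ((hrep k).1 ⟨s, hs, .node hsub' hnil htrans⟩)
    exact (Nat.le_of_dvd hk0 hmk).not_gt hkm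

/-- For every `n` there is a deterministic 2-store automaton
`A_n` with `O(n³)` states accepting exactly the storages `(⊥,v₁)…(⊥,v_n)` with
`p_i ∣ v_i` for each `i`, while every tree automaton recognizing the
E-encoding of this set of configurations needs at least `2ⁿ` states: the
translation from 2-store automata to tree automata over the encoding `E`
requires an exponential blow-up. -/
theorem twostore_to_tree_blowup {Sig : Type} (bot : Sig) :
    ∃ c : ℕ, ∀ n : ℕ,
      (∃ (Q' S T : Type) (_ : Fintype Q') (_ : Fintype S) (_ : Fintype T)
        (A : Enc.TwoStore Q' Sig S T) (q0 : Q'),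
        (∀ q : Q', A.exQ q = true) ∧
        (∀ t t' : T, A.src t = A.src t' → A.sym t = A.sym t' → t = t') ∧
        Fintype.card Q' + Fintype.card S + Fintype.card T ≤ c * (n + 1) ^ 3 ∧
        { x | Enc.TwoStoreAcc A q0 x } = DivStor bot n) ∧
      (∀ (St : Type) (_ : Fintype St) (TA : Enc.TreeAut (Sig ⊕ Unit) St),
        { t | TA.Accepts t } =
          Enc.EncImage bot { c' : Unit × List (Sig × ℕ) | c'.2 ∈ DivStor bot n } →
        2 ^ n ≤ Fintype.card St) := by
  refine ⟨4, fun n => ⟨?_, fun St _ TA hTA => two_pow_le_card_of_accepts_eq_encImage bot hTA⟩⟩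
  refine ⟨_, _, _, inferInstance, inferInstance, inferInstance,
    divChecker bot (Nat.nth Nat.Prime) n, 0, fun _ => rfl,
    fun t t' hsrc _ => Fin.castSucc_injective n hsrc, card_divChecker_nth_prime_le n, ?_⟩
  rw [divChecker_language, divStor_eq]
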